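/- arXiv:1002.1335 — 2 statements merged into one kernel-verified Lean document; each statement's English description precedes it below -/
import Mathlib

section
/- The acyclic path probability c(j → A) is monotonically increasing in the target set: for all sets A ⊆ B ⊆ V and every node j ∈ V, c(j → A) ≤ c(j → B). -/
open Finset

noncomputable def cPath {V : Type*} [Fintype V] [DecidableEq V]
    (w : V → V → ℝ) (W D : Finset V) (j : V) : ℝ := by
  classical
  exact ∑' k : ℕ, ∑ x : Fin (k + 1) → V,
    if x 0 = j ∧ Function.Injective x ∧
        (∀ m : Fin (k + 1), (m : ℕ) < k → x m ∈ W \ D) ∧ x (Fin.last k) ∈ D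
    then ∏ i : Fin k, w (x i.succ) (x i.castSucc) else 0

noncomputable def cPathVia {V : Type*} [Fintype V] [DecidableEq V]
    (w : V → V → ℝ) (W D : Finset V) (j v : V) : ℝ := by
  classical
  exact ∑' k : ℕ, ∑ x : Fin (k + 1) → V,
    if x 0 = j ∧ Function.Injective x ∧
        (∀ m : Fin (k + 1), (m : ℕ) < k → x m ∈ W \ D) ∧ x (Fin.last k) ∈ D ∧
        (∃ u : Fin (k + 1), (u : ℕ) < k ∧ x u = v)
    then ∏ i : Fin k, w (x i.succ) (x i.castSucc) else 0

noncomputable def sigmaInfl {V : Type*} [Fintype V] [DecidableEq V]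
    (w : V → V → ℝ) (W A : Finset V) : ℝ :=
  ∑ j ∈ W, cPath w W A j

def pjv {V : Type*} (w : V → V → ℝ) (j v : V) : List V → ℝ
  | [] => w v j
  | l :: ls => w l j * pjv w l v ls

noncomputable def fPoly {ι : Type*} [DecidableEq ι] (m : ℕ) (T : Finset ι) (x : ι → ℝ) : ℝ :=
  (Nat.factorial m : ℝ) * ∑ S ∈ T.powersetCard m, ∏ s ∈ S, x s

/-!
Splitting off the first step of a path gives, for `j ∈ W \ D`, the recursion
`c^W(j → D) = ∑_{i ≠ j} w(i,j) c^{W \ {j}}(i → D)`, while otherwise `c^W(j → D)` is `1` or `0`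
according as `j ∈ D` or not. Induction on `W` then yields `c ≤ 1` from the column-sum bound, and
monotonicity in the target: the recursion handles `j ∈ W \ B`, and for `j ∈ B \ A` we have
`c(j → B) = 1 ≥ c(j → A)`.
-/

section AcyclicPath

variable {V : Type*}

def pathWeight (w : V → V → ℝ) {k : ℕ} (x : Fin (k + 1) → V) : ℝ :=
  ∏ i : Fin k, w (x i.succ) (x i.castSucc)

lemma pathWeight_cons (w : V → V → ℝ) (j : V) {k : ℕ} (y : Fin (k + 1) → V) :
    pathWeight w (Fin.cons j y : Fin (k + 2) → V) = w (y 0) j * pathWeight w y := by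
  simp [pathWeight, Fin.prod_univ_succ]

variable [DecidableEq V]

def IsAcyclicPath (W D : Finset V) (k : ℕ) (x : Fin (k + 1) → V) : Prop :=
  Function.Injective x ∧ (∀ m : Fin k, x m.castSucc ∈ W \ D) ∧ x (Fin.last k) ∈ D

lemma isAcyclicPath_cons_iff {W D : Finset V} {j : V} (hj : j ∈ W \ D) {k : ℕ}
    {y : Fin (k + 1) → V} :
    IsAcyclicPath W D (k + 1) (Fin.cons j y) ↔ IsAcyclicPath (W.erase j) D k y := by
  simp only [IsAcyclicPath, Fin.cons_injective_iff, Fin.forall_fin_succ, Fin.castSucc_zero,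
    Fin.cons_zero, ← Fin.succ_castSucc, Fin.cons_succ, ← Fin.succ_last, mem_sdiff,
    mem_erase]
  obtain ⟨hjW, hjD⟩ := mem_sdiff.1 hj
  constructor
  · rintro ⟨⟨hjy, hinj⟩, ⟨-, hint⟩, hlast⟩
    exact ⟨hinj, fun m => ⟨⟨fun h => hjy ⟨_, h⟩, (hint m).1⟩, (hint m).2⟩, hlast⟩
  · rintro ⟨hinj, hint, hlast⟩
    refine ⟨⟨?_, hinj⟩, ⟨⟨hjW, hjD⟩, fun m => ⟨(hint m).1.2, (hint m).2⟩⟩, hlast⟩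
    rintro ⟨m, rfl⟩
    induction m using Fin.lastCases with
    | last => exact hjD hlast
    | cast m => exact (hint m).1.1 rfl

variable [Fintype V]

instance (W D : Finset V) (k : ℕ) : DecidablePred (IsAcyclicPath W D k) :=
  fun _ => inferInstanceAs (Decidable (_ ∧ _ ∧ _))

def cPathLen (w : V → V → ℝ) (W D : Finset V) (j : V) (k : ℕ) : ℝ :=
  ∑ x : Fin (k + 1) → V, if x 0 = j ∧ IsAcyclicPath W D k x then pathWeight w x else 0

lemma cPath_eq_tsum_cPathLen (w : V → V → ℝ) (W D : Finset V) (j : V) :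
    cPath w W D j = ∑' k, cPathLen w W D j k := by
  have hinterior (k : ℕ) (x : Fin (k + 1) → V) :
      (∀ m : Fin (k + 1), (m : ℕ) < k → x m ∈ W \ D) ↔ ∀ m : Fin k, x m.castSucc ∈ W \ D :=
    ⟨fun h m => h _ m.isLt, fun h m hm => h ⟨m, hm⟩⟩
  unfold cPath cPathLen
  exact tsum_congr fun k => sum_congr rfl fun x _ =>
    if_congr (by rw [IsAcyclicPath, hinterior]) rfl rfl

lemma cPathLen_eq_zero_of_card_le (w : V → V → ℝ) (W D : Finset V) (j : V) {k : ℕ}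
    (hk : Fintype.card V ≤ k) : cPathLen w W D j k = 0 := by
  refine sum_eq_zero fun x _ => if_neg fun ⟨_, hx, _⟩ => ?_
  have := Fintype.card_le_of_injective x hx
  rw [Fintype.card_fin] at this
  omega

lemma summable_cPathLen (w : V → V → ℝ) (W D : Finset V) (j : V) :
    Summable (cPathLen w W D j) :=
  summable_of_ne_finset_zero (s := range (Fintype.card V)) fun _ hk =>
    cPathLen_eq_zero_of_card_le w W D j (by simpa using hk)

lemma cPathLen_zero (w : V → V → ℝ) (W D : Finset V) (j : V) :
    cPathLen w W D j 0 = if j ∈ D then 1 else 0 := by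
  rw [cPathLen, ← (Equiv.funUnique (Fin 1) V).symm.sum_comp]
  simp [IsAcyclicPath, Function.injective_of_subsingleton, pathWeight, ite_and]

lemma cPathLen_succ_eq_zero (w : V → V → ℝ) {W D : Finset V} {j : V} (hj : j ∉ W \ D) (k : ℕ) :
    cPathLen w W D j (k + 1) = 0 :=
  sum_eq_zero fun _ _ => if_neg fun ⟨h0, hx⟩ => hj (h0 ▸ hx.2.1 0)

lemma cPathLen_succ (w : V → V → ℝ) {W D : Finset V} {j : V} (hj : j ∈ W \ D) (k : ℕ) :
    cPathLen w W D j (k + 1) = ∑ i, w i j * cPathLen w (W.erase j) D i k := by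
  calc cPathLen w W D j (k + 1)
      = ∑ y : Fin (k + 1) → V, if IsAcyclicPath (W.erase j) D k y
          then w (y 0) j * pathWeight w y else 0 := by
        rw [cPathLen, ← (Fin.consEquiv fun _ => V).sum_comp, Fintype.sum_prod_type]
        simp only [Fin.consEquiv, Equiv.coe_fn_mk]
        simp [ite_and, isAcyclicPath_cons_iff hj, pathWeight_cons]
    _ = ∑ i, w i j * cPathLen w (W.erase j) D i k := by
        simp only [cPathLen, mul_sum, mul_ite, mul_zero, ite_and]
        rw [sum_comm]
        simp

lemma cPath_of_notMem_sdiff (w : V → V → ℝ) {W D : Finset V} {j : V} (hj : j ∉ W \ D) :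
    cPath w W D j = if j ∈ D then 1 else 0 := by
  rw [cPath_eq_tsum_cPathLen, (summable_cPathLen w W D j).tsum_eq_zero_add, cPathLen_zero]
  simp [cPathLen_succ_eq_zero w hj]

lemma cPath_of_mem_sdiff (w : V → V → ℝ) {W D : Finset V} {j : V} (hj : j ∈ W \ D) :
    cPath w W D j = ∑ i ∈ univ.erase j, w i j * cPath w (W.erase j) D i := by
  have hjD : j ∉ D := (mem_sdiff.1 hj).2
  have hjj : cPath w (W.erase j) D j = 0 := by
    rw [cPath_of_notMem_sdiff w (by simp), if_neg hjD]
  calc cPath w W D j = ∑ i, w i j * cPath w (W.erase j) D i := by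
        rw [cPath_eq_tsum_cPathLen, (summable_cPathLen w W D j).tsum_eq_zero_add, cPathLen_zero,
          if_neg hjD, zero_add, tsum_congr (cPathLen_succ w hj),
          Summable.tsum_finsetSum fun i _ => (summable_cPathLen w _ D i).mul_left (w i j)]
        simp only [tsum_mul_left, ← cPath_eq_tsum_cPathLen]
    _ = ∑ i ∈ univ.erase j, w i j * cPath w (W.erase j) D i := by
        rw [← add_sum_erase _ _ (mem_univ j), hjj, mul_zero, zero_add]

lemma cPath_le_one {w : V → V → ℝ} (hw0 : ∀ i j : V, 0 ≤ w i j)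
    (hw1 : ∀ j : V, ∑ i ∈ univ.erase j, w i j ≤ 1) (W D : Finset V) (j : V) :
    cPath w W D j ≤ 1 := by
  induction W using strongInduction generalizing j with
  | _ W ih =>
    by_cases hj : j ∈ W \ D
    · have hjW : W.erase j ⊂ W := erase_ssubset (mem_sdiff.1 hj).1
      calc cPath w W D j = ∑ i ∈ univ.erase j, w i j * cPath w (W.erase j) D i :=
            cPath_of_mem_sdiff w hj
        _ ≤ ∑ i ∈ univ.erase j, w i j :=
            sum_le_sum fun i _ => mul_le_of_le_one_right (hw0 i j) (ih _ hjW i)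
        _ ≤ 1 := hw1 j
    · rw [cPath_of_notMem_sdiff w hj]
      split_ifs <;> norm_num

lemma cPath_le_cPath_of_subset {w : V → V → ℝ} (hw0 : ∀ i j : V, 0 ≤ w i j)
    (hw1 : ∀ j : V, ∑ i ∈ univ.erase j, w i j ≤ 1) {A B : Finset V} (hAB : A ⊆ B)
    (W : Finset V) (j : V) : cPath w W A j ≤ cPath w W B j := by
  induction W using strongInduction generalizing j with
  | _ W ih =>
    by_cases hjB : j ∈ W \ B
    · have hjA : j ∈ W \ A := sdiff_subset_sdiff subset_rfl hAB hjB
      have hjW : W.erase j ⊂ W := erase_ssubset (mem_sdiff.1 hjB).1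
      rw [cPath_of_mem_sdiff w hjA, cPath_of_mem_sdiff w hjB]
      exact sum_le_sum fun i _ => mul_le_mul_of_nonneg_left (ih _ hjW i) (hw0 i j)
    · rw [cPath_of_notMem_sdiff w hjB]
      split_ifs with hj
      · exact cPath_le_one hw0 hw1 W A j
      · have hjA : j ∉ W \ A := fun h => hjB (mem_sdiff.2 ⟨(mem_sdiff.1 h).1, hj⟩)
        rw [cPath_of_notMem_sdiff w hjA, if_neg fun h => hj (hAB h)]

end AcyclicPath

theorem stmt9 {V : Type*} [Fintype V] [DecidableEq V] (w : V → V → ℝ)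
    (hw0 : ∀ i j : V, 0 ≤ w i j)
    (hw1 : ∀ j : V, ∑ i ∈ Finset.univ.erase j, w i j ≤ 1)
    (A B : Finset V) (hAB : A ⊆ B) (j : V) :
    cPath w Finset.univ A j ≤ cPath w Finset.univ B j :=
  cPath_le_cPath_of_subset hw0 hw1 hAB univ j
end

section
/- In the UISLT model, let A₀ ⊆ V with |A₀| = K, enumerate V \ A₀ = {j_1, …, j_k} with k = n − K, and set α_{A₀} := ∑_{i ∈ A₀} α_i and, for 0 ≤ m ≤ k−1, h^m := ∑_{T ⊆ {1,…,k}, |T| = m+1} (∏_{l ∈ T} β_{j_l}) · f^m((α_{j_l})_{l ∈ T}). Then the expected influence of A₀ satisfies σ^(V, A₀) = |A₀| + α_{A₀} ∑_{m=0}^{k-1} h^m. -/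
open Finset

/-!
Every vertex of `A₀` contributes `1`. A path of length `m + 1` from outside `A₀` is an injective
tuple `y₀, …, y_m` in `V \ A₀` followed by an endpoint `a ∈ A₀`, and for `w(i, j) = α_i β_j` its
weight factors as `α_a · β_{y₀} · ∏_{l ≥ 1} α_{y_l} β_{y_l}`; summing over `a` gives the factor
`α_{A₀}`. Grouping the tuples by their first entry `e` and the set `S` of the remaining entries
(each `S` arises from `m!` orderings), and then by `T = S ∪ {e}`, turns the sum over tuples into
`∑_T (∏_T β) · f^m((α_l)_{l ∈ T})`.
-/
open scoped Nat

section InjectiveTuples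

variable {V : Type*} [DecidableEq V]

lemma injective_of_card_image_univ {m : ℕ} {z : Fin m → V} (h : #(univ.image z) = m) :
    Function.Injective z := by
  rw [← Set.injOn_univ, ← coe_univ, ← card_image_iff, h, card_univ, Fintype.card_fin]

variable [Fintype V]

def injectiveTuples (U : Finset V) (m : ℕ) : Finset (Fin m → V) :=
  {z | Function.Injective z ∧ ∀ i, z i ∈ U}

lemma mem_injectiveTuples {U : Finset V} {m : ℕ} {z : Fin m → V} :
    z ∈ injectiveTuples U m ↔ Function.Injective z ∧ ∀ i, z i ∈ U := by
  simp [injectiveTuples]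

lemma card_filter_image_univ_eq {m : ℕ} {S : Finset V} (hS : #S = m) :
    #{z : Fin m → V | univ.image z = S} = m ! := by
  have hset : ({z : Fin m → V | univ.image z = S} : Finset _) =
      (univ : Finset (Fin m ≃ S)).image (fun σ i => (σ i : V)) := by
    ext z
    simp only [mem_filter, mem_univ, true_and, mem_image]
    constructor
    · intro hz
      have hmem : ∀ i, z i ∈ S := fun i => hz ▸ mem_image_of_mem z (mem_univ i)
      have hbij : Function.Bijective (fun i => (⟨z i, hmem i⟩ : S)) := by
        refine (Fintype.bijective_iff_surjective_and_card _).2 ⟨fun s => ?_, by simp [hS]⟩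
        obtain ⟨i, -, hi⟩ := mem_image.mp (show (s : V) ∈ univ.image z from hz ▸ s.2)
        exact ⟨i, Subtype.ext hi⟩
      exact ⟨Equiv.ofBijective _ hbij, rfl⟩
    · rintro ⟨σ, rfl⟩
      ext v
      simp only [mem_image, mem_univ, true_and]
      exact ⟨fun ⟨i, hi⟩ => hi ▸ (σ i).2, fun hv => ⟨σ.symm ⟨v, hv⟩, by simp⟩⟩
  have hinj : Function.Injective (fun (σ : Fin m ≃ S) i => (σ i : V)) :=
    fun σ τ h => Equiv.ext fun i => Subtype.ext (congrFun h i)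
  rw [hset, card_image_of_injective _ hinj, card_univ, Fintype.card_equiv (Fintype.equivOfCardEq
    (by simp [hS])), Fintype.card_fin]

lemma sum_injectiveTuples_prod (U : Finset V) (m : ℕ) (C : V → ℝ) :
    ∑ z ∈ injectiveTuples U m, ∏ i, C (z i) = fPoly m U C := by
  have hmaps : ∀ z ∈ injectiveTuples U m, univ.image z ∈ U.powersetCard m := by
    intro z hz
    rw [mem_injectiveTuples] at hz
    rw [mem_powersetCard, card_image_of_injective _ hz.1, card_univ, Fintype.card_fin]
    exact ⟨fun v hv => by obtain ⟨i, -, rfl⟩ := mem_image.mp hv; exact hz.2 i, rfl⟩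
  rw [fPoly, ← sum_fiberwise_of_maps_to hmaps, mul_sum]
  refine sum_congr rfl fun S hS => ?_
  obtain ⟨hSU, hS⟩ := mem_powersetCard.mp hS
  have hfiber : (injectiveTuples U m).filter (univ.image · = S) =
      (univ : Finset (Fin m → V)).filter (univ.image · = S) := by
    ext z
    simp only [mem_filter, mem_univ, true_and, mem_injectiveTuples, and_iff_right_iff_imp]
    intro hz
    exact ⟨injective_of_card_image_univ (hz ▸ hS),
      fun i => hSU (hz ▸ mem_image_of_mem z (mem_univ i))⟩
  have hprod : ∀ z ∈ (univ : Finset (Fin m → V)).filter (univ.image · = S),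
      ∏ i, C (z i) = ∏ s ∈ S, C s := by
    intro z hz
    rw [mem_filter] at hz
    rw [← hz.2, prod_image fun i _ j _ h => injective_of_card_image_univ (hz.2 ▸ hS) h]
  rw [hfiber, sum_congr rfl hprod, sum_const, card_filter_image_univ_eq hS, nsmul_eq_mul]

lemma sum_injectiveTuples_succ {M : Type*} [AddCommMonoid M] (U : Finset V) (m : ℕ)
    (f : (Fin (m + 1) → V) → M) :
    ∑ y ∈ injectiveTuples U (m + 1), f y =
      ∑ e ∈ U, ∑ z ∈ injectiveTuples (U.erase e) m, f (Fin.cons e z) := by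
  rw [sum_sigma']
  refine sum_nbij' (fun y => ⟨y 0, Fin.tail y⟩) (fun p => Fin.cons p.1 p.2) ?_ ?_ ?_ ?_ ?_
  · intro y hy
    simp only [mem_injectiveTuples, mem_sigma, mem_erase] at hy ⊢
    rw [← Fin.cons_self_tail y, Fin.cons_injective_iff] at hy
    simp only [Fin.forall_fin_succ, Fin.cons_zero, Fin.cons_succ, Set.mem_range, not_exists] at hy
    exact ⟨hy.2.1, hy.1.2, fun i => ⟨fun h => hy.1.1 i h, hy.2.2 i⟩⟩
  · rintro ⟨e, z⟩ hp
    simp only [mem_injectiveTuples, mem_sigma, mem_erase] at hp ⊢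
    rw [Fin.cons_injective_iff]
    simp only [Fin.forall_fin_succ, Fin.cons_zero, Fin.cons_succ, Set.mem_range, not_exists]
    exact ⟨⟨fun i h => (hp.2.2 i).1 h, hp.2.1⟩, hp.1, fun i => (hp.2.2 i).2⟩
  · exact fun y _ => by simp
  · exact fun p _ => by simp
  · exact fun y _ => by simp

end InjectiveTuples

section Powersets

variable {V : Type*} [DecidableEq V]

lemma sum_sum_powersetCard_erase_insert {M : Type*} [AddCommMonoid M] (U : Finset V) (m : ℕ)
    (g : Finset V → Finset V → M) :
    ∑ e ∈ U, ∑ S ∈ (U.erase e).powersetCard m, g (insert e S) S =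
      ∑ T ∈ U.powersetCard (m + 1), ∑ S ∈ T.powersetCard m, g T S := by
  rw [sum_sigma', sum_sigma']
  refine sum_bij (fun p _ => ⟨insert p.1 p.2, p.2⟩) ?_ ?_ ?_ fun _ _ => rfl
  · rintro ⟨e, S⟩ hp
    simp only [mem_sigma, mem_powersetCard, subset_erase] at hp ⊢
    obtain ⟨he, ⟨hSU, heS⟩, hS⟩ := hp
    exact ⟨⟨insert_subset he hSU, by rw [card_insert_of_notMem heS, hS]⟩, subset_insert e S, hS⟩
  · rintro ⟨e, S⟩ hp ⟨e', S'⟩ hp' h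
    simp only [Sigma.mk.injEq, heq_eq_eq] at h
    obtain ⟨hT, rfl⟩ := h
    simp only [mem_sigma, mem_powersetCard, subset_erase] at hp
    have he : e ∈ insert e' S := hT ▸ mem_insert_self e S
    rw [mem_insert, or_iff_left hp.2.1.2] at he
    rw [he]
  · rintro ⟨T, S⟩ hp
    simp only [mem_sigma, mem_powersetCard] at hp
    obtain ⟨⟨hTU, hT⟩, hST, hS⟩ := hp
    obtain ⟨e, heS, rfl⟩ := exists_eq_insert_iff.mpr ⟨hST, by rw [hS, hT]⟩
    refine ⟨⟨e, S⟩, ?_, rfl⟩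
    simp only [mem_sigma, mem_powersetCard, subset_erase]
    exact ⟨hTU (mem_insert_self e S), ⟨(subset_insert e S).trans hTU, heS⟩, hS⟩

lemma sum_mul_fPoly_erase (U : Finset V) (m : ℕ) (α β : V → ℝ) :
    ∑ e ∈ U, β e * fPoly m (U.erase e) (fun v => α v * β v) =
      ∑ T ∈ U.powersetCard (m + 1), (∏ t ∈ T, β t) * fPoly m T α := by
  simp only [fPoly, mul_left_comm _ (m ! : ℝ), ← mul_sum]
  congr 1
  simp only [mul_sum]
  rw [← sum_sum_powersetCard_erase_insert]
  refine sum_congr rfl fun e _ => sum_congr rfl fun S hS => ?_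
  have heS : e ∉ S := (subset_erase.mp (mem_powersetCard.mp hS).1).2
  rw [prod_insert heS, prod_mul_distrib]
  ring

lemma fPoly_map {ι : Type*} [DecidableEq ι] (m : ℕ) (T : Finset ι) (f : ι ↪ V) (x : V → ℝ) :
    fPoly m (T.map f) x = fPoly m T (x ∘ f) := by
  simp [fPoly, powersetCard_map]

end Powersets

section Paths

variable {V : Type*} [Fintype V] [DecidableEq V]

def paths (W D : Finset V) (k : ℕ) : Finset (Fin (k + 1) → V) :=
  {x | Function.Injective x ∧ (∀ i : Fin k, x i.castSucc ∈ W \ D) ∧ x (Fin.last k) ∈ D}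

lemma mem_paths {W D : Finset V} {k : ℕ} {x : Fin (k + 1) → V} :
    x ∈ paths W D k ↔
      Function.Injective x ∧ (∀ i : Fin k, x i.castSucc ∈ W \ D) ∧ x (Fin.last k) ∈ D := by
  simp [paths]

lemma le_card_sdiff_of_mem_paths {W D : Finset V} {k : ℕ} {x : Fin (k + 1) → V}
    (hx : x ∈ paths W D k) : k ≤ #(W \ D) := by
  obtain ⟨hinj, hW, -⟩ := mem_paths.mp hx
  simpa using card_le_card_of_injOn (s := univ) (fun i : Fin k => x i.castSucc)
    (fun i _ => hW i) (hinj.comp (Fin.castSucc_injective k)).injOn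

variable (w : V → V → ℝ) (W D : Finset V)

lemma cPath_eq_tsum (j : V) :
    cPath w W D j =
      ∑' k, ∑ x ∈ paths W D k with x 0 = j, ∏ i : Fin k, w (x i.succ) (x i.castSucc) := by
  simp only [cPath, paths, filter_filter, sum_filter]
  refine tsum_congr fun k => sum_congr rfl fun x _ => if_congr ?_ rfl rfl
  simp only [Fin.forall_fin_succ', Fin.val_castSucc, Fin.is_lt, forall_const, Fin.val_last,
    lt_self_iff_false, IsEmpty.forall_iff, and_true]
  tauto

lemma cPath_eq_sum_range (j : V) :
    cPath w W D j = ∑ k ∈ range (#(W \ D) + 1),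
      ∑ x ∈ paths W D k with x 0 = j, ∏ i : Fin k, w (x i.succ) (x i.castSucc) := by
  rw [cPath_eq_tsum]
  refine tsum_eq_sum fun k hk => sum_eq_zero fun x hx => ?_
  have := le_card_sdiff_of_mem_paths (mem_filter.mp hx).1
  simp only [mem_range] at hk
  omega

lemma cPath_eq_one_of_mem {j : V} (hj : j ∈ D) : cPath w W D j = 1 := by
  have hlong : ∀ k, {x ∈ paths W D (k + 1) | x 0 = j} = ∅ := fun k => filter_eq_empty_iff.mpr
    fun x hx h0 => (mem_sdiff.mp ((mem_paths.mp hx).2.1 0)).2 (h0 ▸ hj)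
  have hshort : {x ∈ paths W D 0 | x 0 = j} = {fun _ => j} := by
    ext x
    simp only [mem_filter, mem_paths, mem_singleton, funext_iff]
    refine ⟨fun ⟨_, h0⟩ i => Fin.fin_one_eq_zero i ▸ h0, fun h => ?_⟩
    exact ⟨⟨fun a b _ => a.fin_one_eq_zero.trans b.fin_one_eq_zero.symm, finZeroElim,
      (h _).symm ▸ hj⟩, h 0⟩
  simp [cPath_eq_sum_range, sum_range_succ', hlong, hshort]

lemma cPath_eq_sum_of_notMem {j : V} (hj : j ∉ D) :
    cPath w W D j = ∑ k ∈ range #(W \ D),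
      ∑ x ∈ paths W D (k + 1) with x 0 = j, ∏ i : Fin (k + 1), w (x i.succ) (x i.castSucc) := by
  have hshort : {x ∈ paths W D 0 | x 0 = j} = ∅ := filter_eq_empty_iff.mpr
    fun x hx h0 => hj (h0 ▸ (mem_paths.mp hx).2.2)
  simp [cPath_eq_sum_range, sum_range_succ', hshort]

lemma sigmaInfl_eq_card_add_sum_paths :
    sigmaInfl w W D = #(W ∩ D) + ∑ k ∈ range #(W \ D),
      ∑ x ∈ paths W D (k + 1), ∏ i : Fin (k + 1), w (x i.succ) (x i.castSucc) := by
  rw [sigmaInfl, ← sum_filter_add_sum_filter_not W (· ∈ D), filter_mem_eq_inter,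
    filter_notMem_eq_sdiff]
  congr 1
  · simp [sum_congr rfl fun j hj => cPath_eq_one_of_mem w W D (mem_inter.mp hj).2]
  · rw [sum_congr rfl fun j hj => cPath_eq_sum_of_notMem w W D (mem_sdiff.mp hj).2, sum_comm]
    exact sum_congr rfl fun k _ =>
      sum_fiberwise_of_maps_to (fun x hx => (mem_paths.mp hx).2.1 0) _

end Paths

lemma prod_snoc_uislt {V R : Type*} [CommMonoid R] (α β : V → R) {m : ℕ} (y : Fin (m + 1) → V)
    (a : V) :
    ∏ i : Fin (m + 1), α (Fin.snoc (α := fun _ => V) y a i.succ) *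
        β (Fin.snoc (α := fun _ => V) y a i.castSucc) =
      α a * (β (y 0) * ∏ i : Fin m, α (y i.succ) * β (y i.succ)) := by
  rw [prod_mul_distrib, Fin.prod_univ_castSucc, Fin.prod_univ_succ]
  simp only [Fin.succ_castSucc, Fin.snoc_castSucc, Fin.succ_last, Fin.snoc_last, prod_mul_distrib]
  ac_rfl

section UISLT

variable {V : Type*} [Fintype V] [DecidableEq V]

lemma sum_paths_eq_sum_injectiveTuples {M : Type*} [AddCommMonoid M] (W D : Finset V) (k : ℕ)
    (f : (Fin (k + 1) → V) → M) :
    ∑ x ∈ paths W D k, f x = ∑ y ∈ injectiveTuples (W \ D) k, ∑ a ∈ D, f (Fin.snoc y a) := by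
  rw [← sum_product']
  refine sum_nbij' (fun x => (Fin.init x, x (Fin.last k))) (fun p => Fin.snoc p.1 p.2)
    ?_ ?_ ?_ ?_ fun x _ => by simp
  · intro x hx
    simp only [mem_paths, mem_product, mem_injectiveTuples] at hx ⊢
    exact ⟨⟨hx.1.comp (Fin.castSucc_injective k), hx.2.1⟩, hx.2.2⟩
  · rintro ⟨y, a⟩ hp
    simp only [mem_paths, mem_product, mem_injectiveTuples] at hp ⊢
    refine ⟨Fin.snoc_injective_iff.mpr ⟨hp.1.1, ?_⟩, by simpa using hp.1.2, by simpa using hp.2⟩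
    rintro ⟨i, rfl⟩
    exact (mem_sdiff.mp (hp.1.2 i)).2 hp.2
  · exact fun x _ => by simp
  · exact fun p _ => by simp

lemma sum_injectiveTuples_uislt (α β : V → ℝ) (U : Finset V) (m : ℕ) :
    ∑ y ∈ injectiveTuples U (m + 1), β (y 0) * ∏ i : Fin m, α (y i.succ) * β (y i.succ) =
      ∑ T ∈ U.powersetCard (m + 1), (∏ t ∈ T, β t) * fPoly m T α := by
  rw [sum_injectiveTuples_succ, ← sum_mul_fPoly_erase]
  refine sum_congr rfl fun e _ => ?_
  simp only [Fin.cons_zero, Fin.cons_succ]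
  rw [← mul_sum, sum_injectiveTuples_prod _ _ fun v => α v * β v]

lemma sum_paths_uislt (α β : V → ℝ) (W D : Finset V) (m : ℕ) :
    ∑ x ∈ paths W D (m + 1), ∏ i : Fin (m + 1), α (x i.succ) * β (x i.castSucc) =
      (∑ a ∈ D, α a) * ∑ T ∈ (W \ D).powersetCard (m + 1), (∏ t ∈ T, β t) * fPoly m T α := by
  rw [sum_paths_eq_sum_injectiveTuples, ← sum_injectiveTuples_uislt, mul_sum]
  refine sum_congr rfl fun y _ => ?_
  simp only [prod_snoc_uislt, sum_mul]

theorem sigmaInfl_uislt (α β : V → ℝ) (W D : Finset V) :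
    sigmaInfl (fun i j => α i * β j) W D = #(W ∩ D) + (∑ a ∈ D, α a) *
      ∑ m ∈ range #(W \ D), ∑ T ∈ (W \ D).powersetCard (m + 1), (∏ t ∈ T, β t) * fPoly m T α := by
  simp only [sigmaInfl_eq_card_add_sum_paths, sum_paths_uislt, mul_sum]

end UISLT

theorem stmt13_general (n K k : ℕ) (α β : Fin n → ℝ)
    (A₀ : Finset (Fin n)) (hK : A₀.card = K)
    (jf : Fin k → Fin n) (hjf : Function.Injective jf)
    (hjfim : Finset.image jf Finset.univ = Finset.univ \ A₀) :
    sigmaInfl (fun i j => α i * β j) Finset.univ A₀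
      = (K : ℝ) + (∑ i ∈ A₀, α i) *
          ∑ m ∈ Finset.range k,
            ∑ T ∈ (Finset.univ : Finset (Fin k)).powersetCard (m + 1),
              (∏ l ∈ T, β (jf l)) * fPoly m T (fun l => α (jf l)) := by
  have hmap : univ.map ⟨jf, hjf⟩ = univ \ A₀ := by rw [map_eq_image]; exact hjfim
  rw [sigmaInfl_uislt, univ_inter, hK, ← hmap, card_map, card_univ, Fintype.card_fin]
  simp only [powersetCard_map, sum_map, RelEmbedding.coe_toEmbedding, mapEmbedding_apply,
    prod_map, fPoly_map]
  rfl

theorem stmt13 (n K k : ℕ) (α β : Fin n → ℝ)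
    (hα : ∀ i, 0 ≤ α i) (hβ : ∀ i, 0 ≤ β i)
    (hsum : ∀ j : Fin n, β j * ∑ i ∈ Finset.univ.erase j, α i ≤ 1)
    (A₀ : Finset (Fin n)) (hK : A₀.card = K) (hk : k = n - K)
    (jf : Fin k → Fin n) (hjf : Function.Injective jf)
    (hjfim : Finset.image jf Finset.univ = Finset.univ \ A₀) :
    sigmaInfl (fun i j => α i * β j) Finset.univ A₀
      = (K : ℝ) + (∑ i ∈ A₀, α i) *
          ∑ m ∈ Finset.range k,
            ∑ T ∈ (Finset.univ : Finset (Fin k)).powersetCard (m + 1),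
              (∏ l ∈ T, β (jf l)) * fPoly m T (fun l => α (jf l)) :=
  stmt13_general n K k α β A₀ hK jf hjf hjfim
end
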